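/- arXiv:2001.07228 — 5 statements merged into one kernel-verified Lean document; each statement's English description precedes it below -/
import Mathlib

section
/- Let (X,d) be a finitely injective, approximately G-ultrahomogeneous metric space with an isometry group G ≤ Iso(X) acting with the pointwise convergence topology. Suppose ν : X → K is a G-equivariant compactification (continuous G-map with dense image into a compact Hausdorff G-space) that is not injective. Then ν is constant, i.e., the compactification is trivial. -/
/-!
If `ν a = ν b` with `r = dist a b > 0`, approximate ultrahomogeneity moves `(a, b)` by elements
of `G` arbitrarily close to any pair `(x, y)` at distance `r`; as `ν` is continuous and
equivariant and `K` is Hausdorff, `ν x = ν y`. Finite injectivity then provides, for any pair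
`(x, y)`, a point `z` with `dist z x = r` and `dist z y = dist x y - r` (or `= r` when
`dist x y ≤ 2 r`), so induction on `⌈dist x y / r⌉` shows that `ν` identifies all pairs.
-/

open Set Metric

/-- The hypotheses on `ξ` say that `ξ|A` is a Katětov function: the distances from the new
point of a one-point metric extension of `A`. -/
def FinitelyInjective (X : Type*) [MetricSpace X] : Prop :=
  ∀ (A : Finset X) (ξ : X → ℝ),
    (∀ a ∈ A, ∀ b ∈ A, |ξ a - ξ b| ≤ dist a b ∧ dist a b ≤ ξ a + ξ b) →
    (∀ a ∈ A, ENNReal.ofReal (ξ a) ≤ ediam (univ : Set X)) →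
    ∃ y : X, ∀ a ∈ A, dist y a = ξ a

def ApproxUltrahomogeneous (G X : Type*) [MetricSpace X] [SMul G X] : Prop :=
  ∀ ε : ℝ, 0 < ε → ∀ (A : Finset X) (p : X → X),
    (∀ a ∈ A, ∀ b ∈ A, dist (p a) (p b) = dist a b) →
    ∃ g : G, ∀ a ∈ A, dist (p a) (g • a) < ε

lemma ofReal_le_ediam_univ_of_le_dist {X : Type*} [MetricSpace X] {x y : X} {s : ℝ}
    (h : s ≤ dist x y) : ENNReal.ofReal s ≤ ediam (univ : Set X) :=
  calc ENNReal.ofReal s ≤ ENNReal.ofReal (dist x y) := ENNReal.ofReal_le_ofReal h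
    _ = edist x y := (edist_dist x y).symm
    _ ≤ _ := edist_le_ediam_of_mem (mem_univ _) (mem_univ _)

namespace FinitelyInjective

variable {X : Type*} [MetricSpace X]

lemma exists_dist_eq_dist_eq (hX : FinitelyInjective X) {x y : X} {s t : ℝ}
    (hst : |s - t| ≤ dist x y) (hxy : dist x y ≤ s + t)
    (hs : ENNReal.ofReal s ≤ ediam (univ : Set X))
    (ht : ENNReal.ofReal t ≤ ediam (univ : Set X)) :
    ∃ z, dist z x = s ∧ dist z y = t := by
  classical
  have hs₀ : 0 ≤ s := by linarith [neg_abs_le (s - t)]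
  have ht₀ : 0 ≤ t := by linarith [le_abs_self (s - t)]
  by_cases hyx : y = x
  · subst hyx
    have hts : t = s := by simpa [abs_nonpos_iff, sub_eq_zero, eq_comm] using hst
    obtain ⟨z, hz⟩ := hX {y} (fun _ => s) (by simpa using hs₀) (by simpa using hs)
    exact ⟨z, hz y (by simp), hts ▸ hz y (by simp)⟩
  obtain ⟨z, hz⟩ := hX {x, y} (fun w => if w = x then s else t)
    (by
      simp only [Finset.mem_insert, Finset.mem_singleton]
      rintro u (hu | hu) v (hv | hv) <;> rw [hu, hv]
      · simp [hs₀]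
      · simpa [hyx] using ⟨hst, hxy⟩
      · simpa [hyx, dist_comm, abs_sub_comm, add_comm] using ⟨hst, hxy⟩
      · simp [hyx, ht₀])
    (by
      simp only [Finset.mem_insert, Finset.mem_singleton]
      rintro u (hu | hu) <;> rw [hu] <;> simp [hyx, hs, ht])
  exact ⟨z, by simpa using hz x (by simp), by simpa [hyx] using hz y (by simp)⟩

variable {β : Type*} {f : X → β} {r : ℝ}

lemma eq_of_dist_le_two_mul (hX : FinitelyInjective X)
    (hr : ENNReal.ofReal r ≤ ediam (univ : Set X)) (hf : ∀ x y, dist x y = r → f x = f y)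
    {x y : X} (h : dist x y ≤ 2 * r) : f x = f y := by
  obtain ⟨z, hzx, hzy⟩ :=
    hX.exists_dist_eq_dist_eq (s := r) (t := r) (by simp) (by linarith) hr hr
  exact (hf z x hzx).symm.trans (hf z y hzy)

lemma eq_of_dist_le_add (hX : FinitelyInjective X)
    (hr : ENNReal.ofReal r ≤ ediam (univ : Set X)) (hf : ∀ x y, dist x y = r → f x = f y)
    {s : ℝ} (hrs : r ≤ s) (hfs : ∀ x y, dist x y ≤ s → f x = f y)
    {x y : X} (h : dist x y ≤ s + r) : f x = f y := by
  rcases le_or_gt (dist x y) s with hs | hs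
  · exact hfs x y hs
  obtain ⟨z, hzx, hzy⟩ := hX.exists_dist_eq_dist_eq (s := r) (t := dist x y - r)
    (abs_le.2 ⟨by linarith, by linarith⟩) (by linarith) hr
    (ofReal_le_ediam_univ_of_le_dist (by linarith))
  exact (hf z x hzx).symm.trans (hfs z y (by linarith))

theorem eq_of_forall_dist_eq (hX : FinitelyInjective X) (hr₀ : 0 < r)
    (hr : ENNReal.ofReal r ≤ ediam (univ : Set X)) (hf : ∀ x y, dist x y = r → f x = f y)
    (x y : X) : f x = f y := by
  have hmul : ∀ n : ℕ, ∀ x y : X, dist x y ≤ (n + 2) * r → f x = f y := by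
    intro n
    induction n with
    | zero => simpa using fun x y => hX.eq_of_dist_le_two_mul hr hf (x := x) (y := y)
    | succ n ih =>
      intro x y h
      refine hX.eq_of_dist_le_add hr hf (s := (n + 2) * r) (by nlinarith) ih ?_
      push_cast at h
      linarith
  obtain ⟨n, hn⟩ := exists_nat_ge (dist x y / r)
  rw [div_le_iff₀ hr₀] at hn
  exact hmul n x y (by linarith)

end FinitelyInjective

namespace ApproxUltrahomogeneous

variable {G X : Type*} [MetricSpace X] [SMul G X]

lemma mem_closure_range_smul (hG : ApproxUltrahomogeneous G X) {a b x y : X}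
    (h : dist x y = dist a b) : (x, y) ∈ closure (range fun g : G => (g • a, g • b)) := by
  classical
  refine Metric.mem_closure_iff.2 fun ε hε => ?_
  obtain ⟨g, hg⟩ := hG ε hε {a, b} (fun z => if z = a then x else y) (by
    simp only [Finset.mem_insert, Finset.mem_singleton]
    rintro u (hu | hu) v (hv | hv) <;> rw [hu, hv] <;> by_cases hba : b = a <;>
      simp [hba, h, dist_comm])
  refine ⟨_, ⟨g, rfl⟩, max_lt (by simpa using hg a (by simp)) ?_⟩
  by_cases hba : b = a
  · subst hba
    obtain rfl : x = y := dist_eq_zero.1 (h.trans (dist_self b))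
    simpa using hg b (by simp)
  · simpa [hba] using hg b (by simp)

lemma eq_of_dist_eq {K : Type*} [TopologicalSpace K] [T2Space K] [SMul G K]
    (hG : ApproxUltrahomogeneous G X) {ν : X → K} (hν : Continuous ν)
    (hequi : ∀ (g : G) (x : X), ν (g • x) = g • ν x) {a b x y : X} (hab : ν a = ν b)
    (h : dist x y = dist a b) : ν x = ν y := by
  have hclosed : IsClosed {p : X × X | ν p.1 = ν p.2} :=
    isClosed_eq (hν.comp continuous_fst) (hν.comp continuous_snd)
  have horbit : range (fun g : G => (g • a, g • b)) ⊆ {p : X × X | ν p.1 = ν p.2} := by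
    rintro _ ⟨g, rfl⟩
    simp [hequi, hab]
  exact closure_minimal horbit hclosed (hG.mem_closure_range_smul h)

end ApproxUltrahomogeneous

theorem stmt_9_general {X : Type*} [MetricSpace X] {G : Type*} [Group G] [MulAction G X]
    {K : Type*} [TopologicalSpace K] [T2Space K] [MulAction G K]
    (hinj : ∀ (A : Finset X) (ξ : X → ℝ),
      (∀ a ∈ A, ∀ b ∈ A, |ξ a - ξ b| ≤ dist a b ∧ dist a b ≤ ξ a + ξ b) →
      (∀ a ∈ A, ENNReal.ofReal (ξ a) ≤ EMetric.diam (Set.univ : Set X)) →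
      ∃ y : X, ∀ a ∈ A, dist y a = ξ a)
    (hhom : ∀ ε : ℝ, 0 < ε → ∀ (A : Finset X) (p : X → X),
      (∀ a ∈ A, ∀ b ∈ A, dist (p a) (p b) = dist a b) →
      ∃ g : G, ∀ a ∈ A, dist (p a) (g • a) < ε)
    (ν : X → K) (hν : Continuous ν)
    (hequi : ∀ (g : G) (x : X), ν (g • x) = g • ν x)
    (hni : ¬ Function.Injective ν) :
    ∀ x y : X, ν x = ν y := by
  obtain ⟨a, b, hab, hne⟩ := Function.not_injective_iff.1 hni
  exact FinitelyInjective.eq_of_forall_dist_eq hinj (dist_pos.2 hne)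
    (ofReal_le_ediam_univ_of_le_dist le_rfl)
    fun x y h => ApproxUltrahomogeneous.eq_of_dist_eq hhom hν hequi hab h

/-- Let `X` be a finitely injective, approximately `G`-ultrahomogeneous metric space with
an isometric `G`-action, and let `ν : X → K` be a `G`-equivariant compactification
(a continuous equivariant map with dense image into a compact Hausdorff `G`-space).
If `ν` is not injective, then `ν` is constant. -/
theorem stmt_9 {X : Type*} [MetricSpace X] {G : Type*} [Group G] [MulAction G X]
    {K : Type*} [TopologicalSpace K] [CompactSpace K] [T2Space K] [MulAction G K]
    (hiso : ∀ (g : G) (a b : X), dist (g • a) (g • b) = dist a b)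
    (hinj : ∀ (A : Finset X) (ξ : X → ℝ),
      (∀ a ∈ A, ∀ b ∈ A, |ξ a - ξ b| ≤ dist a b ∧ dist a b ≤ ξ a + ξ b) →
      (∀ a ∈ A, ENNReal.ofReal (ξ a) ≤ EMetric.diam (Set.univ : Set X)) →
      ∃ y : X, ∀ a ∈ A, dist y a = ξ a)
    (hhom : ∀ ε : ℝ, 0 < ε → ∀ (A : Finset X) (p : X → X),
      (∀ a ∈ A, ∀ b ∈ A, dist (p a) (p b) = dist a b) →
      ∃ g : G, ∀ a ∈ A, dist (p a) (g • a) < ε)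
    (ν : X → K) (hν : Continuous ν) (hdense : DenseRange ν)
    (hequi : ∀ (g : G) (x : X), ν (g • x) = g • ν x)
    (hni : ¬ Function.Injective ν) :
    ∀ x y : X, ν x = ν y :=
  stmt_9_general hinj hhom ν hν hequi hni
end

section
/- Let G ↷ X be a continuous action of a Polish group G on a Polish metric space X, and let x ∈ X. If x is weakly generic (for every open neighborhood U of the identity there is δ > 0 with B_δ(x) ∩ cl(Gx) ⊆ cl(Ux)), then the orbit Gx is non-meager in its closure cl(Gx). -/
/-!
If the orbit were meagre in its closure `Y`, it would be covered by countably many closed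
nowhere dense sets `Fₙ ⊆ Y`. Their preimages under the orbit map `g ↦ g • x` cover the Baire
space `G`, so one of them contains a neighbourhood `V` of some `g₀`. Weak genericity, transported
from `x` to `g₀ • x` by the homeomorphism `g₀ • ·` of `Y`, makes `closure (V • x)` a neighbourhood
of `g₀ • x` in `Y`; it lies in `Fₙ`, contradicting that `Fₙ` is nowhere dense.
-/

open Set Filter Topology MulAction

theorem not_isMeagre_range_of_closure_image_mem_nhds {G Y : Type*} [TopologicalSpace G]
    [BaireSpace G] [Nonempty G] [TopologicalSpace Y] {π : G → Y} (hπ : Continuous π)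
    (h : ∀ g, ∀ V ∈ 𝓝 g, closure (π '' V) ∈ 𝓝 (π g)) : ¬ IsMeagre (range π) := by
  intro hm
  obtain ⟨S, hS, hSc, hcover⟩ := isMeagre_iff_countable_union_isNowhereDense.mp hm
  have : Countable S := hSc.to_subtype
  have hG : ⋃ t : S, π ⁻¹' closure (t : Set Y) = univ := by
    refine eq_univ_of_forall fun g => ?_
    obtain ⟨t, htS, hgt⟩ := mem_sUnion.mp (hcover (mem_range_self g))
    exact mem_iUnion.mpr ⟨⟨t, htS⟩, subset_closure hgt⟩
  obtain ⟨t, g, hg⟩ := nonempty_interior_of_iUnion_of_closed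
    (fun t : S => isClosed_closure.preimage hπ) hG
  have hsub : closure (π '' interior (π ⁻¹' closure (t : Set Y))) ⊆ closure (t : Set Y) :=
    closure_minimal (image_subset_iff.mpr interior_subset) isClosed_closure
  have hmem : π g ∈ interior (closure (t : Set Y)) :=
    mem_interior_iff_mem_nhds.mpr (mem_of_superset (h g _ (isOpen_interior.mem_nhds hg)) hsub)
  exact (hS t t.2).subset hmem

theorem closure_mem_nhds_of_closure_image_val_mem_nhdsWithin {X : Type*} [TopologicalSpace X]
    {Y : Set X} {y : Y} {t : Set Y} (h : closure (Subtype.val '' t) ∈ 𝓝[Y] (y : X)) :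
    closure t ∈ 𝓝 y :=
  mem_nhds_subtype_iff_nhdsWithin.mpr <| mem_of_superset (inter_mem h self_mem_nhdsWithin)
    fun z ⟨hz, hzY⟩ => ⟨⟨z, hzY⟩, closure_subtype.mpr hz, rfl⟩

theorem smul_mem_closure_orbit {G X : Type*} [Group G] [TopologicalSpace X] [MulAction G X]
    [ContinuousConstSMul G X] {x y : X} (g : G)
    (hy : y ∈ closure (orbit G x)) : g • y ∈ closure (orbit G x) := by
  simpa only [smul_orbit] using smul_closure_subset g (orbit G x) (smul_mem_smul_set hy)

def IsWeaklyGeneric (G : Type*) {X : Type*} [TopologicalSpace G] [Group G] [TopologicalSpace X]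
    [MulAction G X] (x : X) : Prop :=
  ∀ U ∈ 𝓝 (1 : G), closure ((· • x) '' U) ∈ 𝓝[closure (orbit G x)] x

theorem IsWeaklyGeneric.closure_image_mem_nhdsWithin {G X : Type*} [TopologicalSpace G] [Group G]
    [ContinuousMul G] [TopologicalSpace X] [MulAction G X] [ContinuousSMul G X]
    {x : X} (hx : IsWeaklyGeneric G x) (g : G) {V : Set G} (hV : V ∈ 𝓝 g) :
    closure ((· • x) '' V) ∈ 𝓝[closure (orbit G x)] (g • x) := by
  set Y := closure (orbit G x)
  have hU : (g * ·) ⁻¹' V ∈ 𝓝 (1 : G) :=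
    (continuous_const_mul g).continuousAt.preimage_mem_nhds (by rwa [mul_one])
  have hpre : closure ((· • x) '' ((g * ·) ⁻¹' V)) ⊆ (g • ·) ⁻¹' closure ((· • x) '' V) :=
    closure_minimal (by rintro _ ⟨u, hu, rfl⟩; exact subset_closure ⟨g * u, hu, mul_smul g u x⟩)
      (isClosed_closure.preimage (continuous_const_smul (T := X) g))
  have hback : Tendsto (g⁻¹ • ·) (𝓝[Y] (g • x)) (𝓝[Y] x) := by
    have := ((continuous_const_smul (T := X) g⁻¹).continuousWithinAt (s := Y)
      (x := g • x)).tendsto_nhdsWithin fun _ hy => smul_mem_closure_orbit g⁻¹ hy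
    rwa [inv_smul_smul] at this
  simpa only [mem_map, preimage_preimage, smul_inv_smul, preimage_id'] using
    hback (mem_of_superset (hx _ hU) hpre)

theorem stmt_15_general {G : Type*} [TopologicalSpace G] [Group G] [IsTopologicalGroup G]
    [PolishSpace G] {X : Type*} [MetricSpace X]
    [MulAction G X] [ContinuousSMul G X] (x : X)
    (hwg : ∀ U ∈ nhds (1 : G), ∃ δ > (0 : ℝ),
      Metric.ball x δ ∩ closure (MulAction.orbit G x) ⊆
        closure ((fun g : G => g • x) '' U)) :
    ¬ IsMeagre (Subtype.val ⁻¹' (MulAction.orbit G x) :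
        Set {y : X // y ∈ closure (MulAction.orbit G x)}) := by
  have hx : IsWeaklyGeneric G x := fun U hU => Metric.mem_nhdsWithin_iff.mpr (hwg U hU)
  have horbit : ∀ g : G, g • x ∈ closure (orbit G x) := fun g => subset_closure (mem_orbit x g)
  change ¬ IsMeagre (Subtype.val ⁻¹' range (· • x) : Set (closure (orbit G x)))
  rw [← range_codRestrict horbit]
  refine not_isMeagre_range_of_closure_image_mem_nhds
    ((continuous_id.smul continuous_const).codRestrict horbit) fun g V hV => ?_
  apply closure_mem_nhds_of_closure_image_val_mem_nhdsWithin
  rw [image_image]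
  exact hx.closure_image_mem_nhdsWithin g hV

/-- For a continuous action of a Polish group `G` on a Polish metric space `X`:
if `x` is weakly generic (for every neighborhood `U` of the identity there is `δ > 0`
with `B_δ(x) ∩ cl(Gx) ⊆ cl(Ux)`), then the orbit `Gx` is non-meager in its closure. -/
theorem stmt_15 {G : Type*} [TopologicalSpace G] [Group G] [IsTopologicalGroup G]
    [PolishSpace G] {X : Type*} [MetricSpace X] [PolishSpace X]
    [MulAction G X] [ContinuousSMul G X] (x : X)
    (hwg : ∀ U ∈ nhds (1 : G), ∃ δ > (0 : ℝ),
      Metric.ball x δ ∩ closure (MulAction.orbit G x) ⊆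
        closure ((fun g : G => g • x) '' U)) :
    ¬ IsMeagre (Subtype.val ⁻¹' (MulAction.orbit G x) :
        Set {y : X // y ∈ closure (MulAction.orbit G x)}) :=
  stmt_15_general x hwg
end

section
/- Let G ↷ X be a continuous isometric action of a Polish group on a Polish metric space. If the action is weakly micro-transitive (every point is weakly generic) then every orbit is closed. -/
/-!
Fix a complete metric on `G`. If `y ∈ cl(Gx)`, isometry gives `x ∈ cl(Gy)`. Weak genericity at
`a • x` says that every point of `cl(Gx)` close enough to `a • x` is approximated by `a' • x` with
`a'` arbitrarily close to `a`; the required closeness depends on how close `a'` must stay, so it can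
only be met if that tolerance is fixed before the point to approximate is chosen. Moving `a • x`
towards `b • y` and `b • y` towards `a • x` in turn achieves this, and yields Cauchy sequences
`aₙ`, `bₙ` with `dist (aₙ • x) (bₙ • y) → 0`. Their limits satisfy `a • x = b • y`, so `y ∈ Gx`.
No Baire category argument is needed.
-/

open Set Filter Topology Metric TopologicalSpace

namespace MulAction

def IsWeaklyGeneric (G : Type*) {X : Type*} [TopologicalSpace G] [Group G] [PseudoMetricSpace X]
    [MulAction G X] (x : X) : Prop :=
  ∀ U ∈ 𝓝 (1 : G), ∃ δ > (0 : ℝ), ball x δ ∩ closure (orbit G x) ⊆ closure ((· • x) '' U)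

variable {G X : Type*} [Group G] [MulAction G X]

theorem mem_closure_orbit_comm [PseudoMetricSpace X] [IsIsometricSMul G X] {x y : X}
    (h : y ∈ closure (orbit G x)) : x ∈ closure (orbit G y) := by
  refine Metric.mem_closure_iff.2 fun ε hε => ?_
  obtain ⟨_, ⟨g, rfl⟩, hg⟩ := Metric.mem_closure_iff.1 h ε hε
  refine ⟨g⁻¹ • y, mem_orbit _ _, ?_⟩
  rwa [← dist_smul g, smul_inv_smul, dist_comm]

theorem orbit_subset_closure_orbit [TopologicalSpace X] [ContinuousConstSMul G X] {x y : X}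
    (h : x ∈ closure (orbit G y)) : orbit G x ⊆ closure (orbit G y) := by
  rintro _ ⟨g, rfl⟩
  exact smul_closure_orbit_subset g y (smul_mem_smul_set h)

section MetricGroup

variable [MetricSpace G] [ContinuousMul G]

section PseudoMetric

variable [PseudoMetricSpace X]

theorem IsWeaklyGeneric.exists_ball_inter_subset_closure_image_ball {a : G} {x : X} {r : ℝ}
    (h : IsWeaklyGeneric G (a • x)) (hr : 0 < r) :
    ∃ δ > 0, ball (a • x) δ ∩ closure (orbit G x) ⊆ closure ((· • x) '' ball a r) := by
  have hU : (· * a) ⁻¹' ball a r ∈ 𝓝 (1 : G) :=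
    (continuous_mul_const a).continuousAt.preimage_mem_nhds (by simpa using ball_mem_nhds a hr)
  obtain ⟨δ, hδ, hsub⟩ := h _ hU
  rw [orbit_smul] at hsub
  refine ⟨δ, hδ, hsub.trans (closure_mono ?_)⟩
  rintro _ ⟨w, hw, rfl⟩
  exact ⟨w * a, hw, mul_smul w a x⟩

theorem exists_mem_ball_dist_lt_mem_closure_image_ball {a b : G} {x y : X} {r r' ε : ℝ}
    (hgen : IsWeaklyGeneric G (b • y)) (hxy : orbit G x ⊆ closure (orbit G y))
    (hab : b • y ∈ closure ((· • x) '' ball a r)) (hr' : 0 < r') (hε : 0 < ε) :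
    ∃ a' ∈ ball a r, dist (a' • x) (b • y) < ε ∧ a' • x ∈ closure ((· • y) '' ball b r') := by
  obtain ⟨δ, hδ, hsub⟩ := hgen.exists_ball_inter_subset_closure_image_ball hr'
  obtain ⟨_, ⟨a', ha', rfl⟩, hd⟩ := Metric.mem_closure_iff.1 hab _ (lt_min hδ hε)
  rw [dist_comm] at hd
  exact ⟨a', ha', hd.trans_le (min_le_right _ _),
    hsub ⟨mem_ball.2 (hd.trans_le (min_le_left _ _)), hxy (mem_orbit x a')⟩⟩

theorem exists_zigzag_step (hgen : ∀ z : X, IsWeaklyGeneric G z) {x y : X}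
    (hxy : orbit G x ⊆ closure (orbit G y)) (hyx : orbit G y ⊆ closure (orbit G x)) {a b : G}
    {r s : ℝ} (hab : a • x ∈ closure ((· • y) '' ball b r)) (hr : 0 < r) (hs : 0 < s) :
    ∃ a' ∈ ball a r, ∃ b' ∈ ball b r,
      dist (a' • x) (b' • y) < r ∧ a' • x ∈ closure ((· • y) '' ball b' s) := by
  obtain ⟨b', hb', -, hab'⟩ :=
    exists_mem_ball_dist_lt_mem_closure_image_ball (hgen _) hyx hab hr hr
  obtain ⟨a', ha', hd, ha'b'⟩ :=
    exists_mem_ball_dist_lt_mem_closure_image_ball (hgen _) hxy hab' hs hr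
  exact ⟨a', ha', b', hb', hd, ha'b'⟩

theorem exists_zigzag_seq [ContinuousConstSMul G X] (hgen : ∀ z : X, IsWeaklyGeneric G z)
    {x y : X} (hxy : x ∈ closure (orbit G y)) (hyx : y ∈ closure (orbit G x)) :
    ∃ a b : ℕ → G, (∀ n, dist (a n) (a (n + 1)) < (1 / 2) ^ n) ∧
      (∀ n, dist (b n) (b (n + 1)) < (1 / 2) ^ n) ∧
      ∀ n, dist (a (n + 1) • x) (b (n + 1) • y) < (1 / 2) ^ n := by
  have hxy' := orbit_subset_closure_orbit hxy
  have hyx' := orbit_subset_closure_orbit hyx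
  obtain ⟨a₀, ha₀⟩ : ∃ a₀ : G, a₀ • x ∈ closure ((· • y) '' ball (1 : G) ((1 / 2) ^ 0)) := by
    obtain ⟨δ, hδ, hsub⟩ :=
      (hgen ((1 : G) • y)).exists_ball_inter_subset_closure_image_ball (r := (1 / 2) ^ 0) one_pos
    obtain ⟨_, ⟨a₀, rfl⟩, hd⟩ := Metric.mem_closure_iff.1 hyx δ hδ
    refine ⟨a₀, hsub ⟨?_, hxy' (mem_orbit x a₀)⟩⟩
    rwa [mem_ball, one_smul, dist_comm]
  -- the implication sits inside the `∃` so that `choose` yields a total step function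
  have step : ∀ (n : ℕ) (p : G × G), ∃ q : G × G,
      p.1 • x ∈ closure ((· • y) '' ball p.2 ((1 / 2) ^ n)) →
        q.1 • x ∈ closure ((· • y) '' ball q.2 ((1 / 2) ^ (n + 1))) ∧
        dist p.1 q.1 < (1 / 2) ^ n ∧ dist p.2 q.2 < (1 / 2) ^ n ∧
        dist (q.1 • x) (q.2 • y) < (1 / 2) ^ n := by
    intro n p
    by_cases hp : p.1 • x ∈ closure ((· • y) '' ball p.2 ((1 / 2) ^ n))
    · obtain ⟨a', ha', b', hb', hd, hq⟩ :=
        exists_zigzag_step hgen hxy' hyx' hp (s := (1 / 2) ^ (n + 1)) (by positivity) (by positivity)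
      exact ⟨(a', b'), fun _ => ⟨hq, by rwa [dist_comm], by rwa [dist_comm], hd⟩⟩
    · exact ⟨p, fun h => absurd h hp⟩
  choose F hF using step
  let s : ℕ → G × G := fun n => Nat.rec (a₀, 1) F n
  have hs : ∀ n, (s n).1 • x ∈ closure ((· • y) '' ball (s n).2 ((1 / 2) ^ n)) := by
    intro n
    induction n with
    | zero => exact ha₀
    | succ n ih => exact (hF n _ ih).1
  exact ⟨fun n => (s n).1, fun n => (s n).2, fun n => (hF n _ (hs n)).2.1,
    fun n => (hF n _ (hs n)).2.2.1, fun n => (hF n _ (hs n)).2.2.2⟩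

end PseudoMetric

theorem mem_orbit_of_mem_closure_orbit [CompleteSpace G] [MetricSpace X] [ContinuousSMul G X]
    (hgen : ∀ z : X, IsWeaklyGeneric G z) {x y : X} (hxy : x ∈ closure (orbit G y))
    (hyx : y ∈ closure (orbit G x)) : y ∈ orbit G x := by
  obtain ⟨a, b, ha, hb, hab⟩ := exists_zigzag_seq hgen hxy hyx
  have hlim : ∀ c : ℕ → G, (∀ n, dist (c n) (c (n + 1)) < (1 / 2) ^ n) →
      ∃ g, Tendsto (fun n => c (n + 1)) atTop (𝓝 g) := fun c hc =>
    (cauchySeq_tendsto_of_complete <| cauchySeq_of_le_geometric (1 / 2) 1 (by norm_num)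
      fun n => by simpa using (hc n).le).imp fun _ h => h.comp (tendsto_add_atTop_nat 1)
  obtain ⟨g, hg⟩ := hlim a ha
  obtain ⟨h, hh⟩ := hlim b hb
  have hdist : Tendsto (fun n => dist (a (n + 1) • x) (b (n + 1) • y)) atTop
      (𝓝 (dist (g • x) (h • y))) := (hg.smul_const x).dist (hh.smul_const y)
  have hdist_zero : Tendsto (fun n => dist (a (n + 1) • x) (b (n + 1) • y)) atTop (𝓝 0) :=
    squeeze_zero (fun _ => dist_nonneg) (fun n => (hab n).le)
      (tendsto_pow_atTop_nhds_zero_of_lt_one (by norm_num) (by norm_num))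
  have hgh : g • x = h • y := dist_eq_zero.1 (tendsto_nhds_unique hdist hdist_zero)
  exact mem_orbit_iff.2 ⟨h⁻¹ * g, by rw [mul_smul, hgh, inv_smul_smul]⟩

end MetricGroup

theorem isClosed_orbit_of_isWeaklyGeneric [TopologicalSpace G] [IsCompletelyMetrizableSpace G]
    [ContinuousMul G] [MetricSpace X] [ContinuousSMul G X] [IsIsometricSMul G X]
    (hgen : ∀ z : X, IsWeaklyGeneric G z) (x : X) : IsClosed (orbit G x) := by
  let := upgradeIsCompletelyMetrizable G
  exact isClosed_of_closure_subset fun y hy =>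
    mem_orbit_of_mem_closure_orbit hgen (mem_closure_orbit_comm hy) hy

end MulAction

theorem stmt_16_general {G : Type*} [TopologicalSpace G] [Group G] [IsTopologicalGroup G]
    [PolishSpace G] {X : Type*} [MetricSpace X]
    [MulAction G X] [ContinuousSMul G X]
    (hiso : ∀ (g : G) (a b : X), dist (g • a) (g • b) = dist a b)
    (hwmt : ∀ x : X, ∀ U ∈ nhds (1 : G), ∃ δ > (0 : ℝ),
      Metric.ball x δ ∩ closure (MulAction.orbit G x) ⊆
        closure ((fun g : G => g • x) '' U)) :
    ∀ x : X, IsClosed (MulAction.orbit G x) := by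
  have : IsIsometricSMul G X := ⟨fun g => .of_dist_eq (hiso g)⟩
  exact MulAction.isClosed_orbit_of_isWeaklyGeneric hwmt

/-- If a continuous isometric action of a Polish group on a Polish metric space is
weakly micro-transitive (every point is weakly generic), then every orbit is closed. -/
theorem stmt_16 {G : Type*} [TopologicalSpace G] [Group G] [IsTopologicalGroup G]
    [PolishSpace G] {X : Type*} [MetricSpace X] [PolishSpace X]
    [MulAction G X] [ContinuousSMul G X]
    (hiso : ∀ (g : G) (a b : X), dist (g • a) (g • b) = dist a b)
    (hwmt : ∀ x : X, ∀ U ∈ nhds (1 : G), ∃ δ > (0 : ℝ),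
      Metric.ball x δ ∩ closure (MulAction.orbit G x) ⊆
        closure ((fun g : G => g • x) '' U)) :
    ∀ x : X, IsClosed (MulAction.orbit G x) :=
  stmt_16_general hiso hwmt
end

section
/- Let G be a Polish group and X a Polish metric space with a continuous action G ↷ X. If the action is uniformly weakly micro-transitive (UWMT: for every neighborhood U of the identity there is δ > 0 such that B_δ(x) ∩ cl(Gx) ⊆ cl(Ux) for all x ∈ X), then the action is uniformly micro-transitive (UMT: for every neighborhood U of the identity there is δ > 0 such that B_δ(x) ∩ Gx ⊆ Ux for all x ∈ X). -/
/-!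
Effros-style back-and-forth. The radius that weak micro-transitivity provides at `p • x` depends
on `p`, so a single sequence `gₙ • x → y` cannot be controlled; instead one alternately moves
`p • x` close to `q • y` and `q • y` close to `p • x`, each new element staying in a small closed
ball around the previous one, inside right translates of small neighbourhoods of `1`. For a
complete metric on `G` both sequences converge, to some `g, h ∈ V` with `g • x = h • y`, so
`y = (h⁻¹ g) • x ∈ V⁻¹V • x`.
-/

open Metric MulAction Filter Set Topology

def MulAction.UniformlyWeaklyMicroTransitive (G X : Type*) [TopologicalSpace G] [Group G]
    [PseudoMetricSpace X] [MulAction G X] : Prop :=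
  ∀ U ∈ 𝓝 (1 : G), ∃ δ > (0 : ℝ), ∀ x : X,
    ball x δ ∩ closure (orbit G x) ⊆ closure ((fun g : G => g • x) '' U)

theorem exists_tendsto_mem_closure_of_antitone {α : Type*} [PseudoMetricSpace α]
    [CompleteSpace α] {p : ℕ → α} {A : ℕ → Set α} {u : ℕ → ℝ} (hp : ∀ n, p n ∈ A n)
    (hA : Antitone A) (hAu : ∀ n, A n ⊆ ball (p n) (u n)) (hu : Tendsto u atTop (𝓝 0)) :
    ∃ g ∈ closure (A 0), Tendsto p atTop (𝓝 g) := by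
  have hcauchy : CauchySeq p := Metric.cauchySeq_iff'.2 fun ε hε => by
    obtain ⟨N, hN⟩ := (hu.eventually (gt_mem_nhds hε)).exists
    exact ⟨N, fun n hn => (mem_ball.1 (hAu N (hA hn (hp n)))).trans hN⟩
  obtain ⟨g, hg⟩ := cauchySeq_tendsto_of_complete hcauchy
  refine ⟨g, mem_closure_of_tendsto hg (Eventually.of_forall fun n => ?_), hg⟩
  exact hA (Nat.zero_le n) (hp n)

theorem exists_ball_smul_inter_orbit_subset_closure_image {G X : Type*} [TopologicalSpace G]
    [Group G] [ContinuousMul G] [PseudoMetricSpace X] [MulAction G X]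
    (huwmt : UniformlyWeaklyMicroTransitive G X) {A : Set G} (hA : IsOpen A) {p : G}
    (hp : p ∈ A) :
    ∃ δ > (0 : ℝ), ∀ x : X, ball (p • x) δ ∩ orbit G x ⊆ closure ((fun g : G => g • x) '' A) := by
  have hV : (· * p) ⁻¹' A ∈ 𝓝 (1 : G) :=
    (hA.preimage (continuous_mul_const p)).mem_nhds (by simpa using hp)
  obtain ⟨δ, hδ, hδV⟩ := huwmt _ hV
  refine ⟨δ, hδ, fun x z ⟨hzx, hz⟩ => ?_⟩
  rw [← orbit_smul p x] at hz
  refine closure_mono ?_ (hδV (p • x) ⟨hzx, subset_closure hz⟩)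
  rintro _ ⟨w, hw, rfl⟩
  exact ⟨w * p, hw, mul_smul w p x⟩

namespace Effros

variable (G : Type*) {X : Type*} [PseudoMetricSpace G] [Group G] [MetricSpace X] [MulAction G X]

/-- One side of the back-and-forth: all later group elements are confined to the open set
`A ∋ p`, and every point of the orbit within `δ` of `p • x` is approximated by `A • x`. -/
structure Approximant (x : X) where
  p : G
  A : Set G
  δ : ℝ
  isOpen : IsOpen A
  mem : p ∈ A
  pos : 0 < δ
  approx : ball (p • x) δ ∩ orbit G x ⊆ closure ((fun g : G => g • x) '' A)

structure Pair (x y : X) where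
  fst : Approximant G x
  snd : Approximant G y
  mem_ball : snd.p • y ∈ ball (fst.p • x) fst.δ

variable {G}

namespace Approximant

variable {x : X}

def Refines (t s : Approximant G x) (r : ℝ) : Prop :=
  closure t.A ⊆ s.A ∧ t.A ⊆ ball t.p r

theorem exists_refines [ContinuousMul G] (huwmt : UniformlyWeaklyMicroTransitive G X)
    (s : Approximant G x) {z : X} (hz : z ∈ ball (s.p • x) s.δ ∩ orbit G x) {ε r : ℝ}
    (hε : 0 < ε) (hr : 0 < r) :
    ∃ t : Approximant G x, t.Refines s r ∧ t.p • x ∈ ball z ε := by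
  obtain ⟨_, ⟨p, hp, rfl⟩, hpz⟩ := Metric.mem_closure_iff.1 (s.approx hz) ε hε
  obtain ⟨ρ, hρ, hρA⟩ := nhds_basis_closedBall.mem_iff.1 (s.isOpen.mem_nhds hp)
  have hρr : 0 < min ρ r := lt_min hρ hr
  obtain ⟨δ, hδ, hδA⟩ :=
    exists_ball_smul_inter_orbit_subset_closure_image huwmt isOpen_ball (mem_ball_self hρr)
  refine ⟨⟨p, ball p (min ρ r), δ, isOpen_ball, mem_ball_self hρr, hδ, hδA x⟩, ⟨?_, ?_⟩, ?_⟩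
  · exact closure_ball_subset_closedBall.trans
      ((closedBall_subset_closedBall (min_le_left ρ r)).trans hρA)
  · exact ball_subset_ball (min_le_right ρ r)
  · rw [mem_ball, dist_comm]
    exact hpz

theorem exists_tendsto_of_refines [CompleteSpace G] {s : ℕ → Approximant G x}
    (hs : ∀ n, (s (n + 1)).Refines (s n) ((1 / 2 : ℝ) ^ n)) :
    ∃ g ∈ (s 0).A, Tendsto (fun n => (s n).p) atTop (𝓝 g) := by
  obtain ⟨g, hg, hlim⟩ := exists_tendsto_mem_closure_of_antitone (A := fun n => (s (n + 1)).A)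
    (fun n => (s (n + 1)).mem)
    (antitone_nat_of_succ_le fun n => subset_closure.trans (hs (n + 1)).1) (fun n => (hs n).2)
    (tendsto_pow_atTop_nhds_zero_of_lt_one (by norm_num) (by norm_num))
  exact ⟨g, (hs 0).1 hg, (tendsto_add_atTop_iff_nat 1).1 hlim⟩

end Approximant

variable {x y : X}

namespace Pair

theorem exists_step [ContinuousMul G] (huwmt : UniformlyWeaklyMicroTransitive G X)
    (hy : y ∈ orbit G x) (S : Pair G x y) {r : ℝ} (hr : 0 < r) :
    ∃ S' : Pair G x y, S'.fst.Refines S.fst r ∧ S'.snd.Refines S.snd r ∧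
      S'.snd.p • y ∈ ball (S'.fst.p • x) r := by
  have hxy : orbit G x = orbit G y := orbit_eq_iff.2 (mem_orbit_symm.1 hy)
  obtain ⟨s, hs, hsy⟩ := S.fst.exists_refines huwmt
    ⟨S.mem_ball, hxy ▸ mem_orbit _ _⟩ S.snd.pos hr
  obtain ⟨t, ht, htx⟩ := S.snd.exists_refines huwmt
    ⟨hsy, hxy ▸ mem_orbit _ _⟩ (lt_min s.pos hr) hr
  exact ⟨⟨s, t, ball_subset_ball (min_le_left _ _) htx⟩, hs, ht,
    ball_subset_ball (min_le_right _ _) htx⟩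

theorem exists_smul_eq [ContinuousMul G] [CompleteSpace G] [ContinuousSMul G X]
    (huwmt : UniformlyWeaklyMicroTransitive G X) (hy : y ∈ orbit G x) (S : Pair G x y) :
    ∃ g ∈ S.fst.A, ∃ h ∈ S.snd.A, g • x = h • y := by
  choose next hfst hsnd hdist using fun (n : ℕ) (T : Pair G x y) =>
    T.exists_step huwmt hy (r := (1 / 2 : ℝ) ^ n) (by positivity)
  let F : ℕ → Pair G x y := fun n => Nat.rec S next n
  obtain ⟨g, hg, hgF⟩ := Approximant.exists_tendsto_of_refines (s := fun n => (F n).fst)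
    fun n => hfst n (F n)
  obtain ⟨h, hh, hhF⟩ := Approximant.exists_tendsto_of_refines (s := fun n => (F n).snd)
    fun n => hsnd n (F n)
  have hdist_zero : Tendsto (fun n => dist ((F (n + 1)).fst.p • x) ((F (n + 1)).snd.p • y))
      atTop (𝓝 0) :=
    squeeze_zero (fun _ => dist_nonneg)
      (fun n => (dist_comm _ _).trans_le (Metric.mem_ball.1 (hdist n (F n))).le)
      (tendsto_pow_atTop_nhds_zero_of_lt_one (by norm_num) (by norm_num : (1 / 2 : ℝ) < 1))
  have hgx := (hgF.comp (tendsto_add_atTop_nat 1)).smul_const x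
  have hhy := (hhF.comp (tendsto_add_atTop_nat 1)).smul_const y
  exact ⟨g, hg, h, hh, tendsto_nhds_unique (hgx.congr_dist hdist_zero) hhy⟩

end Pair

end Effros

theorem stmt_17_general {G : Type*} [TopologicalSpace G] [Group G] [IsTopologicalGroup G]
    [PolishSpace G] {X : Type*} [MetricSpace X]
    [MulAction G X] [ContinuousSMul G X]
    (huwmt : ∀ U ∈ nhds (1 : G), ∃ δ > (0 : ℝ), ∀ x : X,
      Metric.ball x δ ∩ closure (MulAction.orbit G x) ⊆
        closure ((fun g : G => g • x) '' U)) :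
    ∀ U ∈ nhds (1 : G), ∃ δ > (0 : ℝ), ∀ x : X,
      Metric.ball x δ ∩ MulAction.orbit G x ⊆ (fun g : G => g • x) '' U := by
  let := TopologicalSpace.upgradeIsCompletelyMetrizable G
  intro U hU
  obtain ⟨V, hV, -, hVinv, hVU⟩ := exists_closed_nhds_one_inv_eq_mul_subset hU
  have hV₀ : (1 : G) ∈ interior V := mem_interior_iff_mem_nhds.2 hV
  obtain ⟨δ, hδ, hδV⟩ :=
    exists_ball_smul_inter_orbit_subset_closure_image huwmt isOpen_interior hV₀
  refine ⟨δ, hδ, fun x y ⟨hyx, hy⟩ => ?_⟩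
  let start (z : X) : Effros.Approximant G z :=
    ⟨1, interior V, δ, isOpen_interior, hV₀, hδ, hδV z⟩
  obtain ⟨g, hg, h, hh, hgh⟩ :=
    Effros.Pair.exists_smul_eq huwmt hy ⟨start x, start y, by simpa [start, dist_comm] using hyx⟩
  refine ⟨h⁻¹ * g, hVU (mul_mem_mul ?_ (interior_subset hg)), by simp [mul_smul, hgh]⟩
  rw [← hVinv]
  exact inv_mem_inv.2 (interior_subset hh)

/-- For a continuous action of a Polish group `G` on a Polish metric space `X`:
if the action is uniformly weakly micro-transitive (for every neighborhood `U` of the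
identity there is `δ > 0` with `B_δ(x) ∩ cl(Gx) ⊆ cl(Ux)` for all `x`), then it is
uniformly micro-transitive (`B_δ(x) ∩ Gx ⊆ Ux` for all `x`). -/
theorem stmt_17 {G : Type*} [TopologicalSpace G] [Group G] [IsTopologicalGroup G]
    [PolishSpace G] {X : Type*} [MetricSpace X] [PolishSpace X]
    [MulAction G X] [ContinuousSMul G X]
    (huwmt : ∀ U ∈ nhds (1 : G), ∃ δ > (0 : ℝ), ∀ x : X,
      Metric.ball x δ ∩ closure (MulAction.orbit G x) ⊆
        closure ((fun g : G => g • x) '' U)) :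
    ∀ U ∈ nhds (1 : G), ∃ δ > (0 : ℝ), ∀ x : X,
      Metric.ball x δ ∩ MulAction.orbit G x ⊆ (fun g : G => g • x) '' U :=
  stmt_17_general huwmt
end

section
/- Let G ↷ X be a transitive, continuous isometric action of a topological group on a metric space (X,d), which is uniformly weakly micro-transitive and topologically transitive (every orbit dense). Then every bounded continuous function f : X → ℝ that is right uniformly continuous with respect to the action (for every ε > 0 there is a neighborhood V of the identity with sup_x |f(vx) − f(x)| < ε for all v ∈ V) is uniformly continuous with respect to the metric d. -/
/-! Given `ε`, right uniform continuity gives a neighbourhood `U` of `1` moving `f` by less than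
`ε / 2`, and uniform weak micro-transitivity gives `δ` with `ball y δ ⊆ closure (U • y)`. Every
point within `δ` of `y` is thus a limit of points `g • y` with `g ∈ U`, and continuity of `f`
carries the estimate `dist (f (g • y)) (f y) < ε / 2` over to that limit. -/

open Metric

theorem Continuous.dist_le_of_mem_closure_image_smul {G X Y : Type*} [SMul G X]
    [TopologicalSpace X] [PseudoMetricSpace Y] {f : X → Y} (hf : Continuous f) {U : Set G}
    {x y : X} {ε : ℝ} (hU : ∀ g ∈ U, dist (f (g • y)) (f y) ≤ ε)
    (hx : x ∈ closure ((fun g : G => g • y) '' U)) : dist (f x) (f y) ≤ ε := by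
  have hclosed : IsClosed (f ⁻¹' closedBall (f y) ε) := isClosed_closedBall.preimage hf
  refine closure_minimal ?_ hclosed hx
  rintro _ ⟨g, hg, rfl⟩
  exact hU g hg

theorem stmt_18_general {G : Type*} [TopologicalSpace G] [Group G]
    {X : Type*} [MetricSpace X] [MulAction G X]
    (huwmt : ∀ U ∈ nhds (1 : G), ∃ δ > (0 : ℝ), ∀ x : X,
      Metric.ball x δ ⊆ closure ((fun g : G => g • x) '' U))
    (f : X → ℝ) (hfc : Continuous f)
    (hruc : ∀ ε : ℝ, 0 < ε →
      ∃ U ∈ nhds (1 : G), ∀ g ∈ U, ∀ x : X, |f (g • x) - f x| < ε) :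
    UniformContinuous f := by
  rw [Metric.uniformContinuous_iff]
  intro ε hε
  obtain ⟨U, hU, hUf⟩ := hruc (ε / 2) (half_pos hε)
  obtain ⟨δ, hδ, hball⟩ := huwmt U hU
  refine ⟨δ, hδ, fun {x y} hxy => ?_⟩
  have hx : x ∈ closure ((fun g : G => g • y) '' U) := hball y (mem_ball.mpr hxy)
  calc dist (f x) (f y) ≤ ε / 2 :=
        hfc.dist_le_of_mem_closure_image_smul (fun g hg => (hUf g hg y).le) hx
    _ < ε := half_lt_self hε

/-- Let `G ↷ X` be a continuous isometric action of a topological group on a metric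
space which is topologically transitive (every orbit dense) and uniformly weakly
micro-transitive. Then every bounded continuous right uniformly continuous function
`f : X → ℝ` is uniformly continuous with respect to the metric. -/
theorem stmt_18 {G : Type*} [TopologicalSpace G] [Group G] [IsTopologicalGroup G]
    {X : Type*} [MetricSpace X] [MulAction G X] [ContinuousSMul G X]
    (hiso : ∀ (g : G) (a b : X), dist (g • a) (g • b) = dist a b)
    (htt : ∀ x : X, Dense (MulAction.orbit G x))
    (huwmt : ∀ U ∈ nhds (1 : G), ∃ δ > (0 : ℝ), ∀ x : X,
      Metric.ball x δ ⊆ closure ((fun g : G => g • x) '' U))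
    (f : X → ℝ) (hfb : ∃ C : ℝ, ∀ x : X, |f x| ≤ C) (hfc : Continuous f)
    (hruc : ∀ ε : ℝ, 0 < ε →
      ∃ U ∈ nhds (1 : G), ∀ g ∈ U, ∀ x : X, |f (g • x) - f x| < ε) :
    UniformContinuous f :=
  stmt_18_general huwmt f hfc hruc
end
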